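/- arXiv:1507.03269 — 3 statements merged into one kernel-verified Lean document; each statement's English description precedes it below -/
import Mathlib

section
/- There is an absolute constant C > 0 such that the following holds. Let n ∈ ℕ, τ > 0, ε ∈ (0,1), let v₀ ∈ ℝⁿ be a unit vector, and let A be an n×n×n real array such that |Ẽ[A(x)]| ≤ ε·τ·(Ẽ[‖x‖⁴])^{3/4} for every degree-4 pseudo-expectation Ẽ on ℝⁿ. Let T = τ·v₀^{⊗3} + A, i.e. T_{ijk} = τ·v₀(i)v₀(j)v₀(k) + A_{ijk}. Then every degree-4 pseudo-expectation Ẽ satisfying the constraint {‖x‖² = 1} with Ẽ[T(x)] ≥ (1−ε)·τ satisfies ⟨v₀, Ẽ[x]⟩ ≥ 1 − C·ε, where Ẽ[x] denotes the vector (Ẽ[x_1], …, Ẽ[x_n]); moreover ‖Ẽ[x]‖ ≤ 1, so the unit vector v = Ẽ[x]/‖Ẽ[x]‖ satisfies ⟨v, v₀⟩ ≥ 1 − C·ε. -/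
open Matrix MeasureTheory

noncomputable section

abbrev MvP (n : ℕ) := MvPolynomial (Fin n) ℝ

/-- The polynomial `‖x‖² = ∑ i, x i ^ 2`. -/
def sumSq (n : ℕ) : MvP n := ∑ i, MvPolynomial.X i ^ 2

/-- Degree-4 pseudo-expectation. -/
def IsPE4 {n : ℕ} (E : MvP n →ₗ[ℝ] ℝ) : Prop :=
  E 1 = 1 ∧ ∀ p : MvP n, p.totalDegree ≤ 2 → 0 ≤ E (p ^ 2)

/-- `Ẽ` satisfies the constraint `{‖x‖² = 1}`. -/
def SatSphere {n : ℕ} (E : MvP n →ₗ[ℝ] ℝ) : Prop :=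
  ∀ q : MvP n, q.totalDegree ≤ 2 → E ((sumSq n - 1) * q) = 0

/-- The polynomial `T(x) = ∑_{ijk} T_{ijk} x_i x_j x_k`. -/
def tpoly3 {n : ℕ} (T : Fin n → Fin n → Fin n → ℝ) : MvP n :=
  ∑ i, ∑ j, ∑ k, MvPolynomial.C (T i j k) *
    (MvPolynomial.X i * MvPolynomial.X j * MvPolynomial.X k)

/-- Euclidean norm of a vector. -/
def enorm2 {ι : Type*} [Fintype ι] (v : ι → ℝ) : ℝ := Real.sqrt (∑ i, v i ^ 2)

namespace RoundingAux

open MvPolynomial Finset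

variable {n : ℕ}

def lf (v : Fin n → ℝ) : MvP n := ∑ i, C (v i) * X i

lemma lf_deg (v : Fin n → ℝ) : (lf v).totalDegree ≤ 1 :=
  totalDegree_finsetSum_le fun i _ =>
    (totalDegree_mul _ _).trans (by simp [totalDegree_C, totalDegree_X])

def qf (v : Fin n → ℝ) (i : Fin n) : MvP n := X i - C (v i) * lf v

lemma qf_deg (v : Fin n → ℝ) (i : Fin n) : (qf v i).totalDegree ≤ 1 :=
  (totalDegree_sub _ _).trans (max_le (by simp [totalDegree_X])
    ((totalDegree_mul _ _).trans (by simpa [totalDegree_C] using lf_deg v)))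

lemma sumSq_deg : (sumSq n).totalDegree ≤ 2 :=
  totalDegree_finsetSum_le fun i _ =>
    (totalDegree_pow _ _).trans (by simp [totalDegree_X])

lemma P1 {v : Fin n → ℝ} (hv : ∑ i, v i ^ 2 = 1) :
    ∑ i, (qf v i) ^ 2 = sumSq n - (lf v) ^ 2 := by
  calc ∑ i, (qf v i) ^ 2
      = ∑ i, (X i ^ 2 - 2 * lf v * (C (v i) * X i) + C (v i) ^ 2 * lf v ^ 2 : MvP n) :=
        Finset.sum_congr rfl fun i _ => by unfold qf; ring
    _ = (∑ i, (X i:MvP n) ^ 2) - 2 * lf v * (∑ i, C (v i) * X i)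
          + (∑ i, (C (v i) : MvP n) ^ 2) * lf v ^ 2 := by
        rw [Finset.sum_add_distrib, Finset.sum_sub_distrib, ← Finset.mul_sum, ← Finset.sum_mul]
    _ = sumSq n - 2 * lf v * lf v + 1 * lf v ^ 2 := by
        have hc : (∑ i, (C (v i) : MvP n) ^ 2) = 1 := by
          simp_rw [← map_pow, ← map_sum, hv, _root_.map_one]
        rw [hc]; rfl
    _ = sumSq n - lf v ^ 2 := by ring

lemma pe_cs (E : MvP n →ₗ[ℝ] ℝ) (hE : IsPE4 E) {f g : MvP n}
    (hf : f.totalDegree ≤ 2) (hg : g.totalDegree ≤ 2) :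
    E (f * g) ^ 2 ≤ E (f ^ 2) * E (g ^ 2) := by
  have key : ∀ t : ℝ, 0 ≤ E (g ^ 2) * (t * t) + (2 * E (f * g)) * t + E (f ^ 2) := by
    intro t
    have hd : (C t * g + f).totalDegree ≤ 2 :=
      (totalDegree_add _ _).trans (max_le
        ((totalDegree_mul _ _).trans (by simpa [totalDegree_C] using hg)) hf)
    have h0 := hE.2 _ hd
    have hexp : (C t * g + f) ^ 2 = (t * t) • g ^ 2 + (2 * t) • (f * g) + f ^ 2 := by
      rw [smul_eq_C_mul, smul_eq_C_mul, _root_.map_mul, _root_.map_mul, map_ofNat]; ring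
    rw [hexp, map_add, map_add, _root_.map_smul, _root_.map_smul, smul_eq_mul, smul_eq_mul] at h0
    nlinarith [h0]
  have hd := discrim_le_zero key
  rw [discrim] at hd
  nlinarith [hd]

lemma tail_arith (a N ep : ℝ) (hep : 0 < ep) (ha4 : 1 - 4 * ep ≤ a) (hN0 : 0 ≤ N)
    (hN1 : N ≤ 1) (hCS : a ^ 2 ≤ N ^ 2) : 1 - 8 * ep ≤ a / N := by
  rcases eq_or_lt_of_le hN0 with hN | hN
  · have hNsq0 : N ^ 2 = 0 := by rw [← hN]; ring
    have ha0 : a = 0 := by nlinarith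
    rw [← hN, div_zero]
    nlinarith
  · rw [le_div_iff₀ hN]
    rcases le_or_gt 0 (1 - 4 * ep) with h | h
    · have ha0 : 0 ≤ a := h.trans ha4
      have h1 : (1 - 8 * ep) * N ≤ (1 - 4 * ep) * N := by nlinarith
      have h2 : (1 - 4 * ep) * N ≤ a * N := mul_le_mul_of_nonneg_right ha4 hN.le
      have h3 : a * N ≤ a := by nlinarith
      linarith
    · have haN : -N ≤ a := by nlinarith [sq_nonneg (a + N)]
      have h1 : (1 - 8 * ep) * N ≤ -N := by
        nlinarith [mul_nonneg (by linarith : (0:ℝ) ≤ 8 * ep - 2) hN.le]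
      linarith

end RoundingAux

set_option maxHeartbeats 1000000 in
/-- if the noise `A(x)` has small pseudo-expectation under every degree-4
pseudo-expectation, then any pseudo-expectation on the sphere with large objective value
for `T = τ v₀^{⊗3} + A` has `⟨v₀, Ẽ x⟩ ≥ 1 - Cε`; moreover `‖Ẽ x‖ ≤ 1`, so the unit
vector `Ẽ x / ‖Ẽ x‖` is `(1 - Cε)`-correlated with `v₀`. -/
theorem rounding_sos_solution :
    ∃ C : ℝ, 0 < C ∧
      ∀ (n : ℕ) (τ ε : ℝ) (v₀ : Fin n → ℝ) (A : Fin n → Fin n → Fin n → ℝ),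
        0 < τ → 0 < ε → ε < 1 → (∑ i, v₀ i ^ 2) = 1 →
        (∀ E : MvP n →ₗ[ℝ] ℝ, IsPE4 E →
          |E (tpoly3 A)| ≤ ε * τ * (E (sumSq n ^ 2)) ^ ((3 : ℝ) / 4)) →
        ∀ E : MvP n →ₗ[ℝ] ℝ, IsPE4 E → SatSphere E →
          (1 - ε) * τ ≤ E (tpoly3 fun i j k => τ * v₀ i * v₀ j * v₀ k + A i j k) →
          (1 - C * ε ≤ ∑ i, v₀ i * E (MvPolynomial.X i)) ∧
          enorm2 (fun i => E (MvPolynomial.X i)) ≤ 1 ∧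
          1 - C * ε ≤
            ∑ i, v₀ i *
              (E (MvPolynomial.X i) / enorm2 (fun j => E (MvPolynomial.X j))) := by
  classical
  refine ⟨8, by norm_num, ?_⟩
  intro n τ ε v₀ A hτ hε hε1 hv hA E hPE hSph hobj
  open MvPolynomial RoundingAux in
  have hE1 : E 1 = 1 := hPE.1
  have hsq := hPE.2
  set p : MvP n := RoundingAux.lf v₀ with hp_def
  set q : Fin n → MvP n := RoundingAux.qf v₀ with hq_def
  have hp1 : p.totalDegree ≤ 1 := RoundingAux.lf_deg v₀
  have hp2 : p.totalDegree ≤ 2 := hp1.trans (by norm_num)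
  have hq1 : ∀ i, (q i).totalDegree ≤ 1 := RoundingAux.qf_deg v₀
  have hq2 : ∀ i, (q i).totalDegree ≤ 2 := fun i => (hq1 i).trans (by norm_num)
  have hp2d : (p ^ 2).totalDegree ≤ 2 :=
    (MvPolynomial.totalDegree_pow _ _).trans (by omega)
  have hqsq2 : ∀ i, ((q i) ^ 2).totalDegree ≤ 2 := fun i =>
    (MvPolynomial.totalDegree_pow _ _).trans (by have := hq1 i; omega)
  have hEC : ∀ (c : ℝ) (r : MvP n), E (MvPolynomial.C c * r) = c * E r := fun c r => by
    rw [← MvPolynomial.smul_eq_C_mul, E.map_smul, smul_eq_mul]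
  -- E S = 1
  have hES : E (sumSq n) = 1 := by
    have h := hSph 1 (by simp [MvPolynomial.totalDegree_one])
    rw [mul_one, map_sub, hE1] at h
    linarith
  -- E S^2 = 1
  have hES2 : E (sumSq n ^ 2) = 1 := by
    have h := hSph (sumSq n) RoundingAux.sumSq_deg
    rw [show (sumSq n - 1) * sumSq n = sumSq n ^ 2 - sumSq n by ring, map_sub, hES] at h
    linarith
  set a := E p with ha_def
  set b := E (p ^ 2) with hb_def
  set c := E (p ^ 3) with hc_def
  have hb0 : 0 ≤ b := hsq _ hp2
  have hd0 : 0 ≤ E (p ^ 4) := by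
    have := hsq (p ^ 2) hp2d
    rwa [show (p ^ 2) ^ 2 = p ^ 4 by ring] at this
  have hP1 := RoundingAux.P1 hv
  rw [← hp_def, ← hq_def] at hP1
  -- b ≤ 1
  have hb1 : b ≤ 1 := by
    have h1 : 0 ≤ E (sumSq n - p ^ 2) := by
      rw [← hP1, map_sum]
      exact Finset.sum_nonneg fun i _ => hsq _ (hq2 i)
    rw [map_sub, hES] at h1
    linarith
  -- E (p^4) ≤ b
  have hdb : E (p ^ 4) ≤ b := by
    have hid : p ^ 2 * sumSq n - p ^ 4 = ∑ i, (p * q i) ^ 2 := by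
      rw [show p ^ 2 * sumSq n - p ^ 4 = p ^ 2 * (sumSq n - p ^ 2) by ring, ← hP1,
        Finset.mul_sum]
      exact Finset.sum_congr rfl fun i _ => by ring
    have h2 : 0 ≤ E (p ^ 2 * sumSq n - p ^ 4) := by
      rw [hid, map_sum]
      refine Finset.sum_nonneg fun i _ => hsq _ ?_
      exact (MvPolynomial.totalDegree_mul _ _).trans (by have := hq1 i; omega)
    have h3 : E (p ^ 2 * sumSq n) = b := by
      have h := hSph (p ^ 2) hp2d
      rw [show (sumSq n - 1) * p ^ 2 = p ^ 2 * sumSq n - p ^ 2 by ring, map_sub] at h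
      linarith
    rw [map_sub, h3] at h2
    linarith
  -- c^2 ≤ b * E p^4
  have hcs : c ^ 2 ≤ b * E (p ^ 4) := by
    have h := RoundingAux.pe_cs E hPE hp2 hp2d
    rwa [show p * p ^ 2 = p ^ 3 by ring, show (p ^ 2) ^ 2 = p ^ 4 by ring] at h
  have hcb : c ≤ b := by nlinarith [sq_nonneg (b + c), sq_nonneg (b - c)]
  -- E of the tensor polynomial
  have hcube : p ^ 3 = ∑ i, ∑ j, ∑ k,
      (MvPolynomial.C (v₀ i) * MvPolynomial.X i) * (MvPolynomial.C (v₀ j) * MvPolynomial.X j)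
        * (MvPolynomial.C (v₀ k) * MvPolynomial.X k) := by
    rw [show p ^ 3 = p * p * p by ring, hp_def]
    unfold RoundingAux.lf
    rw [Finset.sum_mul_sum, Finset.sum_mul]
    refine Finset.sum_congr rfl fun i _ => ?_
    rw [Finset.sum_mul]
    refine Finset.sum_congr rfl fun j _ => ?_
    rw [Finset.mul_sum]
  have hT : (tpoly3 fun i j k => τ * v₀ i * v₀ j * v₀ k + A i j k)
      = MvPolynomial.C τ * p ^ 3 + tpoly3 A := by
    rw [hcube]
    simp only [tpoly3, Finset.mul_sum, ← Finset.sum_add_distrib]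
    refine Finset.sum_congr rfl fun i _ => Finset.sum_congr rfl fun j _ =>
      Finset.sum_congr rfl fun k _ => ?_
    rw [map_add, _root_.map_mul, _root_.map_mul, _root_.map_mul]
    ring
  have hAb := hA E hPE
  rw [hES2, Real.one_rpow] at hAb
  have hobj' : (1 - ε) * τ ≤ τ * c + E (tpoly3 A) := by
    rw [hT, map_add, hEC] at hobj
    exact hobj
  have hc1 : 1 - 2 * ε ≤ c := by
    have h1 : E (tpoly3 A) ≤ ε * τ * 1 := (abs_le.mp hAb).2
    have h2 : (1 - 2 * ε) * τ ≤ τ * c := by linarith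
    nlinarith [h2]
  have hb2 : 1 - 2 * ε ≤ b := le_trans hc1 hcb
  -- key: for each i, 0 ≤ E (q i ^ 2) + E (p * q i ^ 2)
  have hkey : ∀ i, 0 ≤ E ((q i) ^ 2) + E (p * (q i) ^ 2) := by
    intro i
    have hsum : (sumSq n - p ^ 2) * (q i) ^ 2 = ∑ j, (q j * q i) ^ 2 := by
      rw [← hP1, Finset.sum_mul]
      exact Finset.sum_congr rfl fun j _ => by ring
    have hid : (2 : MvP n) * ((1 + p) * (q i) ^ 2)
        = ((1 + p) * q i) ^ 2 + (sumSq n - p ^ 2) * (q i) ^ 2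
          + (-1 : ℝ) • ((sumSq n - 1) * (q i) ^ 2) := by
      rw [MvPolynomial.smul_eq_C_mul, map_neg, MvPolynomial.C_1]
      ring
    have hE2 : E ((2 : MvP n) * ((1 + p) * (q i) ^ 2))
        = 2 * (E ((q i) ^ 2) + E (p * (q i) ^ 2)) := by
      rw [show (2 : MvP n) * ((1 + p) * (q i) ^ 2)
        = MvPolynomial.C (2 : ℝ) * ((q i) ^ 2 + p * (q i) ^ 2) by
          rw [map_ofNat]; ring, hEC, map_add]
    have h1p2 : ((1 + p) * q i).totalDegree ≤ 2 := by
      refine (MvPolynomial.totalDegree_mul _ _).trans ?_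
      have : ((1 : MvP n) + p).totalDegree ≤ 1 :=
        (MvPolynomial.totalDegree_add _ _).trans
          (max_le (by simp [MvPolynomial.totalDegree_one]) hp1)
      have := hq1 i
      omega
    have hA1 : 0 ≤ E (((1 + p) * q i) ^ 2) := hsq _ h1p2
    have hA2 : 0 ≤ E ((sumSq n - p ^ 2) * (q i) ^ 2) := by
      rw [hsum, map_sum]
      refine Finset.sum_nonneg fun j _ => hsq _ ?_
      exact (MvPolynomial.totalDegree_mul (q j) (q i)).trans
        (by have h1 := hq1 j; have h2 := hq1 i; omega)
    have hA3 : E ((-1 : ℝ) • ((sumSq n - 1) * (q i) ^ 2)) = 0 := by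
      rw [E.map_smul, hSph _ (hqsq2 i), smul_zero]
    have := congrArg E hid
    rw [hE2, map_add, map_add, hA3, add_zero] at this
    linarith
  -- sum up
  have hsumq : ∑ i, E ((q i) ^ 2) = 1 - b := by
    rw [← map_sum, hP1, map_sub, hES]
  have hsumpq : ∑ i, E (p * (q i) ^ 2) = E (p * sumSq n) - c := by
    have hid : p * sumSq n - p ^ 3 = ∑ i, p * (q i) ^ 2 := by
      rw [show p * sumSq n - p ^ 3 = p * (sumSq n - p ^ 2) by ring, ← hP1, Finset.mul_sum]
    rw [← map_sum, ← hid, map_sub]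
  have hpS : E (p * sumSq n) = a := by
    have h := hSph p hp2
    rw [show (sumSq n - 1) * p = p * sumSq n - p by ring, map_sub] at h
    linarith
  have haux : 0 ≤ (1 - b) + (a - c) := by
    have h := Finset.sum_nonneg (s := Finset.univ) fun i (_ : i ∈ Finset.univ) => hkey i
    rw [Finset.sum_add_distrib, hsumq, hsumpq, hpS] at h
    linarith
  have ha4 : 1 - 4 * ε ≤ a := by linarith
  -- E p = ∑ v₀ i * E (X i)
  have hEp : a = ∑ i, v₀ i * E (MvPolynomial.X i) := by
    rw [ha_def, hp_def]
    unfold RoundingAux.lf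
    rw [map_sum]
    exact Finset.sum_congr rfl fun i _ => hEC _ _
  have goal1 : 1 - 8 * ε ≤ ∑ i, v₀ i * E (MvPolynomial.X i) := by
    rw [← hEp]; linarith
  -- norm bound
  have hXle : ∀ i, (E (MvPolynomial.X i)) ^ 2 ≤ E (MvPolynomial.X i ^ 2) := by
    intro i
    have h := RoundingAux.pe_cs E hPE (f := MvPolynomial.X i) (g := 1)
      (by simp [MvPolynomial.totalDegree_X]) (by simp [MvPolynomial.totalDegree_one])
    rwa [mul_one, one_pow, hE1, mul_one] at h
  have hm1 : (∑ i, (E (MvPolynomial.X i)) ^ 2) ≤ 1 := by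
    calc (∑ i, (E (MvPolynomial.X i)) ^ 2) ≤ ∑ i, E (MvPolynomial.X i ^ 2) :=
          Finset.sum_le_sum fun i _ => hXle i
      _ = E (sumSq n) := by rw [← map_sum]; rfl
      _ = 1 := hES
  have hm0 : 0 ≤ ∑ i, (E (MvPolynomial.X i)) ^ 2 :=
    Finset.sum_nonneg fun i _ => sq_nonneg _
  have goal2 : enorm2 (fun i => E (MvPolynomial.X i)) ≤ 1 := by
    unfold enorm2
    rw [show (1 : ℝ) = Real.sqrt 1 by rw [Real.sqrt_one]]
    exact Real.sqrt_le_sqrt hm1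
  refine ⟨goal1, goal2, ?_⟩
  set N := enorm2 (fun j => E (MvPolynomial.X j)) with hN_def
  have hN0 : 0 ≤ N := Real.sqrt_nonneg _
  have hNsq : N ^ 2 = ∑ i, (E (MvPolynomial.X i)) ^ 2 := Real.sq_sqrt hm0
  have hCSv : a ^ 2 ≤ N ^ 2 := by
    rw [hNsq, hEp]
    calc (∑ i, v₀ i * E (MvPolynomial.X i)) ^ 2
        ≤ (∑ i, v₀ i ^ 2) * ∑ i, (E (MvPolynomial.X i)) ^ 2 :=
          Finset.sum_mul_sq_le_sq_mul_sq _ _ _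
      _ = ∑ i, (E (MvPolynomial.X i)) ^ 2 := by rw [hv, one_mul]
  have hsum3 : ∑ i, v₀ i * (E (MvPolynomial.X i) / N) = a / N := by
    rw [hEp, Finset.sum_div]
    exact Finset.sum_congr rfl fun i _ => by rw [mul_div_assoc]
  rw [hsum3]
  exact RoundingAux.tail_arith a N ε hε ha4 hN0 goal2 hCSv
end
end

section
/- Let Ẽ be a degree-4 pseudo-expectation on ℝⁿ satisfying the constraint {‖x‖² = 1}, let v₀ ∈ ℝⁿ be a unit vector, and let ε ≥ 0. If Ẽ[⟨v₀,x⟩³] ≥ 1 − ε, then Ẽ[⟨v₀,x⟩] ≥ 1 − 2ε, where ⟨v₀,x⟩ denotes the linear polynomial ∑_i v₀(i)·x_i. -/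
noncomputable section

/-- The linear polynomial `⟨v₀, x⟩ = ∑ i, v₀ i • x i`. -/
def linPoly {n : ℕ} (v₀ : Fin n → ℝ) : MvP n :=
  ∑ i, MvPolynomial.C (v₀ i) * MvPolynomial.X i

open MvPolynomial

/-- if a degree-4 pseudo-expectation on the unit sphere has
`Ẽ ⟨v₀,x⟩³ ≥ 1 - ε`, then `Ẽ ⟨v₀,x⟩ ≥ 1 - 2ε`. -/
theorem cube_correlation_to_linear_correlation
    {n : ℕ} (E : MvP n →ₗ[ℝ] ℝ) (hE : IsPE4 E) (hS : SatSphere E)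
    (v₀ : Fin n → ℝ) (hv₀ : (∑ i, v₀ i ^ 2) = 1) (ε : ℝ) (hε : 0 ≤ ε)
    (h : 1 - ε ≤ E (linPoly v₀ ^ 3)) :
    1 - 2 * ε ≤ E (linPoly v₀) := by
  set v : MvP n := linPoly v₀ with hv
  set S : MvP n := sumSq n with hSdef
  set q : MvP n := (1 + v) ^ 2 + v ^ 2 with hq
  set ℓ : Fin n → Fin n → MvP n := fun i j => C (v₀ i) * X j - C (v₀ j) * X i with hℓ
  -- degree facts
  have hvdeg : v.totalDegree ≤ 1 := by
    refine le_trans (totalDegree_finset_sum _ _) ?_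
    apply Finset.sup_le
    intro i _
    refine le_trans (totalDegree_mul _ _) ?_
    simp [totalDegree_X, totalDegree_C]
  have h1v : (1 - v).totalDegree ≤ 1 := by
    refine le_trans (totalDegree_sub _ _) ?_
    simp [totalDegree_one, hvdeg]
  have h1v' : (1 + v).totalDegree ≤ 1 := by
    refine le_trans (totalDegree_add _ _) ?_
    simp [totalDegree_one, hvdeg]
  have hqdeg : q.totalDegree ≤ 2 := by
    refine le_trans (totalDegree_add _ _) (max_le ?_ ?_) <;>
      exact le_trans (totalDegree_pow _ _) (by omega)
  have hℓdeg : ∀ i j, (ℓ i j).totalDegree ≤ 1 := by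
    intro i j
    refine le_trans (totalDegree_sub _ _) (max_le ?_ ?_) <;>
      · refine le_trans (totalDegree_mul _ _) ?_
        simp [totalDegree_X, totalDegree_C]
  have hmul2 : ∀ p r : MvP n, p.totalDegree ≤ 1 → r.totalDegree ≤ 1 →
      (p * r).totalDegree ≤ 2 := fun p r hp hr =>
    le_trans (totalDegree_mul _ _) (by omega)
  -- Lagrange identity
  have hC1 : (∑ i, (C (v₀ i) : MvP n) ^ 2) = 1 := by
    simp_rw [← map_pow]
    rw [← map_sum, hv₀, map_one]
  have lag : (∑ i, ∑ j, (ℓ i j) ^ 2) = 2 * (S - v ^ 2) := by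
    have expand : ∀ i j : Fin n, (ℓ i j) ^ 2 =
        C (v₀ i) ^ 2 * X j ^ 2 + X i ^ 2 * C (v₀ j) ^ 2
          - 2 * ((C (v₀ i) * X i) * (C (v₀ j) * X j)) := by
      intro i j; rw [hℓ]; ring
    simp_rw [expand, Finset.sum_sub_distrib, Finset.sum_add_distrib,
      ← Finset.mul_sum, ← Finset.sum_mul]
    rw [hv, linPoly, hSdef, sumSq, hC1]
    ring
  -- the SoS certificate, multiplied by 2
  have cert : (4 : MvP n) * (1 + v - 2 * v ^ 3) =
      2 * ((1 - v) * (1 + v)) ^ 2 + 2 * ((1 - v) * v) ^ 2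
        + (∑ i, ∑ j, ((ℓ i j * (1 + v)) ^ 2 + (ℓ i j * v) ^ 2))
        - 2 * ((S - 1) * q) := by
    have : (∑ i, ∑ j, ((ℓ i j * (1 + v)) ^ 2 + (ℓ i j * v) ^ 2)) =
        (∑ i, ∑ j, (ℓ i j) ^ 2) * q := by
      rw [Finset.sum_mul]
      refine Finset.sum_congr rfl fun i _ => ?_
      rw [Finset.sum_mul]
      refine Finset.sum_congr rfl fun j _ => ?_
      rw [hq]; ring
    rw [this, lag, hq]
    ring
  -- apply E
  have hCmul : ∀ (c : ℝ) (p : MvP n), E (C c * p) = c * E p := by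
    intro c p; rw [← smul_eq_C_mul, map_smul]; rfl
  have hE2 : ∀ p : MvP n, E (2 * p) = 2 * E p := by
    intro p; rw [show (2 : MvP n) = C 2 from (map_ofNat C 2).symm, hCmul]
  have hE4 : ∀ p : MvP n, E (4 * p) = 4 * E p := by
    intro p; rw [show (4 : MvP n) = C 4 from (map_ofNat C 4).symm, hCmul]
  have hEcert := congrArg E cert
  rw [map_sub, map_add, map_add] at hEcert
  have e4 : E ((4 : MvP n) * (1 + v - 2 * v ^ 3)) = 4 * (1 + E v - 2 * E (v ^ 3)) := by
    rw [hE4, map_sub, map_add, hE2, hE.1]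
  have hsq1 : 0 ≤ E (((1 - v) * (1 + v)) ^ 2) := hE.2 _ (hmul2 _ _ h1v h1v')
  have hsq2 : 0 ≤ E (((1 - v) * v) ^ 2) := hE.2 _ (hmul2 _ _ h1v hvdeg)
  have hsum : 0 ≤ E (∑ i, ∑ j, ((ℓ i j * (1 + v)) ^ 2 + (ℓ i j * v) ^ 2)) := by
    rw [map_sum]
    refine Finset.sum_nonneg fun i _ => ?_
    rw [map_sum]
    refine Finset.sum_nonneg fun j _ => ?_
    rw [map_add]
    exact add_nonneg (hE.2 _ (hmul2 _ _ (hℓdeg i j) h1v')) (hE.2 _ (hmul2 _ _ (hℓdeg i j) hvdeg))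
  have hzero : E ((S - 1) * q) = 0 := hS q hqdeg
  rw [e4, hE2, hE2, hE2, hzero] at hEcert
  -- conclude
  nlinarith [hsq1, hsq2, hsum, h, hε]
end
end

section
/- Let Ẽ be a degree-4 pseudo-expectation on ℝⁿ and let M be a real n²×n matrix with rows indexed by pairs (j,k) ∈ [n]×[n]. Then Ẽ[∑_{i,j,k} M_{(j,k),i} x_i x_j x_k] ≤ ‖M‖ · (Ẽ[‖x‖⁴])^{3/4}, where ‖M‖ is the spectral (operator) norm of M. -/
open Matrix

noncomputable section

/-- Spectral (operator) norm of a real matrix, w.r.t. Euclidean norms. -/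
def opNorm {ι κ : Type*} [Fintype ι] [Fintype κ] [DecidableEq κ]
    (M : Matrix ι κ ℝ) : ℝ :=
  ‖LinearMap.toContinuousLinearMap (Matrix.toEuclideanLin M)‖

namespace PE7Aux

open MvPolynomial

/-- The linear polynomial `⟨v, x⟩`. -/
def linForm {n : ℕ} (v : Fin n → ℝ) : MvP n := ∑ i, C (v i) * X i

/-- The quadratic polynomial `xᵀ A x`. -/
def quadPoly {n : ℕ} (A : Matrix (Fin n) (Fin n) ℝ) : MvP n :=
  ∑ i, ∑ j, C (A i j) * (X i * X j)

lemma totalDegree_linForm {n : ℕ} (v : Fin n → ℝ) : (linForm v).totalDegree ≤ 1 := by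
  refine (totalDegree_finset_sum _ _).trans (Finset.sup_le fun i _ => ?_)
  calc (C (v i) * X i).totalDegree ≤ (C (v i)).totalDegree + (X i).totalDegree :=
        totalDegree_mul _ _
    _ ≤ 1 := by simp [totalDegree_X]

lemma linForm_mul {n : ℕ} (v w : Fin n → ℝ) :
    linForm v * linForm w = ∑ i, ∑ j, C (v i * w j) * (X i * X j) := by
  rw [linForm, linForm, Finset.sum_mul_sum]
  refine Finset.sum_congr rfl fun i _ => Finset.sum_congr rfl fun j _ => ?_
  rw [_root_.map_mul]; ring

lemma sum_sq_linForm {n : ℕ} {α : Type*} [Fintype α] (B : Matrix α (Fin n) ℝ) :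
    ∑ a, linForm (B a) ^ 2 = quadPoly (Bᵀ * B) := by
  have h : ∀ a, linForm (B a) ^ 2 = ∑ i, ∑ j, C (B a i * B a j) * (X i * X j) := by
    intro a; rw [sq, linForm_mul]
  simp only [h, quadPoly, Matrix.mul_apply, Matrix.transpose_apply, map_sum,
    Finset.sum_mul]
  rw [Finset.sum_comm]
  exact Finset.sum_congr rfl fun i _ => Finset.sum_comm

/-- Cauchy–Schwarz for pseudo-expectations. -/
lemma pe_CS {n : ℕ} {ι : Type*} [Fintype ι] (E : MvP n →ₗ[ℝ] ℝ) (hE : IsPE4 E)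
    (p q : ι → MvP n) (hp : ∀ a, (p a).totalDegree ≤ 2) (hq : ∀ a, (q a).totalDegree ≤ 2) :
    E (∑ a, p a * q a) ≤ Real.sqrt (E (∑ a, p a ^ 2)) * Real.sqrt (E (∑ a, q a ^ 2)) := by
  set A := E (∑ a, p a ^ 2) with hAdef
  set B := E (∑ a, p a * q a) with hBdef
  set D := E (∑ a, q a ^ 2) with hDdef
  have hA : 0 ≤ A := by
    rw [hAdef, map_sum]
    exact Finset.sum_nonneg fun a _ => hE.2 _ (hp a)
  have key : ∀ t : ℝ, 0 ≤ A * (t * t) + (2 * B) * t + D := by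
    intro t
    have hdeg : ∀ a, (t • p a + q a).totalDegree ≤ 2 := fun a =>
      (totalDegree_add _ _).trans
        (max_le ((totalDegree_smul_le _ _).trans (hp a)) (hq a))
    have expand : ∀ a : ι, (t • p a + q a) ^ 2
        = (t * t) • p a ^ 2 + (2 * t) • (p a * q a) + q a ^ 2 := by
      intro a
      simp only [smul_eq_C_mul, _root_.map_mul, map_ofNat]
      ring
    have h0 : 0 ≤ E (∑ a, (t • p a + q a) ^ 2) := by
      rw [map_sum]
      exact Finset.sum_nonneg fun a _ => hE.2 _ (hdeg a)
    have h1 : E (∑ a, (t • p a + q a) ^ 2) = A * (t * t) + (2 * B) * t + D := by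
      simp only [expand, Finset.sum_add_distrib, ← Finset.smul_sum, map_add,
        LinearMap.map_smul, smul_eq_mul, hAdef, hBdef, hDdef]
      ring
    linarith [h0, h1 ▸ h0]
  have disc : discrim A (2 * B) D ≤ 0 := discrim_le_zero key
  rw [discrim] at disc
  have hB2 : B ^ 2 ≤ A * D := by nlinarith
  calc B ≤ |B| := le_abs_self B
    _ = Real.sqrt (B ^ 2) := (Real.sqrt_sq_eq_abs B).symm
    _ ≤ Real.sqrt (A * D) := Real.sqrt_le_sqrt hB2
    _ = Real.sqrt A * Real.sqrt D := Real.sqrt_mul hA D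

lemma mulVec_dot_le {n : ℕ} {α : Type*} [Fintype α] (M : Matrix α (Fin n) ℝ) (x : Fin n → ℝ) :
    (M *ᵥ x) ⬝ᵥ (M *ᵥ x) ≤ opNorm M ^ 2 * (x ⬝ᵥ x) := by
  set f := LinearMap.toContinuousLinearMap (Matrix.toEuclideanLin M)
  set v : EuclideanSpace ℝ (Fin n) := (WithLp.equiv 2 (Fin n → ℝ)).symm x
  have hfv : f v = (WithLp.equiv 2 (α → ℝ)).symm (M *ᵥ x) := by
    show Matrix.toEuclideanLin M v = _
    rw [Matrix.toEuclideanLin_apply]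
    simp [v]
  have h1 : ‖f v‖ ≤ opNorm M * ‖v‖ := f.le_opNorm v
  have hnv : ‖v‖ ^ 2 = x ⬝ᵥ x := by
    rw [EuclideanSpace.norm_eq, Real.sq_sqrt (by positivity)]
    simp [v, dotProduct, sq]
  have hnfv : ‖f v‖ ^ 2 = (M *ᵥ x) ⬝ᵥ (M *ᵥ x) := by
    rw [hfv, EuclideanSpace.norm_eq, Real.sq_sqrt (by positivity)]
    simp [dotProduct, sq]
  have h2 : ‖f v‖ ^ 2 ≤ (opNorm M * ‖v‖) ^ 2 := by
    nlinarith [norm_nonneg v, norm_nonneg (f v)]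
  calc (M *ᵥ x) ⬝ᵥ (M *ᵥ x) = ‖f v‖ ^ 2 := hnfv.symm
    _ ≤ (opNorm M * ‖v‖) ^ 2 := h2
    _ = opNorm M ^ 2 * (x ⬝ᵥ x) := by rw [mul_pow, hnv]

lemma psd_gap {n : ℕ} {α : Type*} [Fintype α] (M : Matrix α (Fin n) ℝ) :
    (opNorm M ^ 2 • (1 : Matrix (Fin n) (Fin n) ℝ) - Mᵀ * M).PosSemidef := by
  refine Matrix.PosSemidef.of_dotProduct_mulVec_nonneg ?_ ?_
  · ext i j
    simp only [conjTranspose_apply, Matrix.sub_apply, Matrix.smul_apply, Matrix.one_apply,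
      Matrix.mul_apply, Matrix.transpose_apply, smul_eq_mul, star_trivial]
    have h1 : (if j = i then (1:ℝ) else 0) = if i = j then 1 else 0 := by
      by_cases h : i = j <;> simp [h, Ne.symm, eq_comm]
    rw [h1]
    congr 1
    exact Finset.sum_congr rfl fun a _ => mul_comm _ _
  · intro x
    have h1 : star x ⬝ᵥ ((opNorm M ^ 2 • (1 : Matrix (Fin n) (Fin n) ℝ) - Mᵀ * M) *ᵥ x)
        = opNorm M ^ 2 * (x ⬝ᵥ x) - (M *ᵥ x) ⬝ᵥ (M *ᵥ x) := by
      rw [sub_mulVec, dotProduct_sub]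
      congr 1
      · rw [smul_mulVec, one_mulVec, dotProduct_smul]
        simp [star, smul_eq_mul]
      · rw [← Matrix.mulVec_mulVec, Matrix.dotProduct_mulVec, Matrix.vecMul_transpose]
        simp [star]
    rw [h1]
    have := mulVec_dot_le M x
    linarith

open scoped MatrixOrder in
lemma E_quadPoly_nonneg {n : ℕ} (E : MvP n →ₗ[ℝ] ℝ) (hE : IsPE4 E)
    {A : Matrix (Fin n) (Fin n) ℝ} (hA : A.PosSemidef) : 0 ≤ E (quadPoly A) := by
  have hs : (CFC.sqrt A).PosSemidef := (CFC.sqrt_nonneg A).posSemidef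
  have hB : CFC.sqrt A * CFC.sqrt A = A := CFC.sqrt_mul_sqrt_self A hA.nonneg
  have hsym : (CFC.sqrt A)ᵀ = CFC.sqrt A := by
    ext i j
    have h := congrFun (congrFun hs.1 i) j
    simpa [conjTranspose_apply] using h
  have hdecomp : quadPoly A = ∑ a, linForm (CFC.sqrt A a) ^ 2 := by
    rw [sum_sq_linForm, hsym, hB]
  rw [hdecomp, map_sum]
  exact Finset.sum_nonneg fun a _ =>
    hE.2 _ ((totalDegree_linForm _).trans one_le_two)

lemma quadPoly_smul_one_sub {n : ℕ} (c : ℝ) (A : Matrix (Fin n) (Fin n) ℝ) :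
    quadPoly (c • (1 : Matrix (Fin n) (Fin n) ℝ) - A) = C c * sumSq n - quadPoly A := by
  unfold quadPoly sumSq
  rw [Finset.mul_sum, ← Finset.sum_sub_distrib]
  refine Finset.sum_congr rfl fun i _ => ?_
  simp only [Matrix.sub_apply, Matrix.smul_apply, Matrix.one_apply, smul_eq_mul,
    map_sub, sub_mul, Finset.sum_sub_distrib]
  congr 1
  rw [Finset.sum_eq_single i]
  · simp [sq]
  · intro j _ hj
    rw [if_neg (Ne.symm hj)]
    simp
  · simp

end PE7Aux

open MvPolynomial PE7Aux

/-- for any degree-4 pseudo-expectation and any `n² × n` matrix `M`,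
`Ẽ ⟨x⊗x, M x⟩ ≤ ‖M‖ (Ẽ ‖x‖⁴)^{3/4}`. -/
theorem pe_cubic_bound_from_op_norm
    {n : ℕ} (E : MvP n →ₗ[ℝ] ℝ) (hE : IsPE4 E)
    (M : Matrix (Fin n × Fin n) (Fin n) ℝ) :
    E (∑ i, ∑ j, ∑ k, MvPolynomial.C (M (j, k) i) *
        (MvPolynomial.X i * MvPolynomial.X j * MvPolynomial.X k))
      ≤ opNorm M * (E (sumSq n ^ 2)) ^ ((3 : ℝ) / 4) := by
  set c := opNorm M with hc_def
  have hc : 0 ≤ c := norm_nonneg _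
  set p : Fin n × Fin n → MvP n := fun a => X a.1 * X a.2 with hp_def
  set q : Fin n × Fin n → MvP n := fun a => linForm (M a) with hq_def
  have hp : ∀ a, (p a).totalDegree ≤ 2 := fun a =>
    (totalDegree_mul _ _).trans (by simp [totalDegree_X])
  have hq : ∀ a, (q a).totalDegree ≤ 2 := fun a =>
    (totalDegree_linForm _).trans one_le_two
  -- rewrite the cubic polynomial as ∑ p·q
  have hswap : ∀ F : Fin n → Fin n → Fin n → MvP n,
      (∑ j, ∑ k, ∑ i, F i j k) = ∑ i, ∑ j, ∑ k, F i j k := by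
    intro F
    calc (∑ j, ∑ k, ∑ i, F i j k) = ∑ j, ∑ i, ∑ k, F i j k :=
          Finset.sum_congr rfl fun j _ => Finset.sum_comm
      _ = ∑ i, ∑ j, ∑ k, F i j k := Finset.sum_comm
  have hLHS : (∑ i, ∑ j, ∑ k, C (M (j, k) i) * (X i * X j * X k)) = ∑ a, p a * q a := by
    rw [Fintype.sum_prod_type, ← hswap]
    refine Finset.sum_congr rfl fun j _ => Finset.sum_congr rfl fun k _ => ?_
    simp only [hp_def, hq_def, linForm, Finset.mul_sum]
    exact Finset.sum_congr rfl fun i _ => by ring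
  have hPsq : (∑ a, p a ^ 2) = sumSq n ^ 2 := by
    have h1 : sumSq n ^ 2 = ∑ j, ∑ k, (X j ^ 2 * X k ^ 2 : MvP n) := by
      rw [sq, sumSq, Finset.sum_mul_sum]
    rw [h1, Fintype.sum_prod_type]
    exact Finset.sum_congr rfl fun j _ => Finset.sum_congr rfl fun k _ => mul_pow _ _ _
  have hQsq : (∑ a, q a ^ 2) = quadPoly (Mᵀ * M) := sum_sq_linForm M
  -- degree of sumSq
  have hdegS : (sumSq n).totalDegree ≤ 2 := by
    refine (totalDegree_finset_sum _ _).trans (Finset.sup_le fun i _ => ?_)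
    simp [totalDegree_X_pow]
  set D := E (sumSq n ^ 2) with hD_def
  have hD : 0 ≤ D := hE.2 _ hdegS
  -- E sumSq ≤ √D
  have hSle : E (sumSq n) ≤ Real.sqrt D := by
    have h := pe_CS E hE (fun _ : Unit => sumSq n) (fun _ => 1)
      (fun _ => hdegS) (fun _ => by simp)
    simpa [hE.1] using h
  -- E (∑ q²) ≤ c² √D
  have hgap := E_quadPoly_nonneg E hE (psd_gap M)
  have hgapeq : quadPoly (c ^ 2 • (1 : Matrix (Fin n) (Fin n) ℝ) - Mᵀ * M)
      = C (c ^ 2) * sumSq n - quadPoly (Mᵀ * M) := quadPoly_smul_one_sub _ _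
  have hEC : ∀ (r : ℝ) (f : MvP n), E (C r * f) = r * E f := fun r f => by
    rw [← smul_eq_C_mul, LinearMap.map_smul, smul_eq_mul]
  have hQle : E (quadPoly (Mᵀ * M)) ≤ c ^ 2 * E (sumSq n) := by
    rw [hgapeq, map_sub, hEC] at hgap
    linarith
  have hEq2 : E (∑ a, q a ^ 2) ≤ c ^ 2 * Real.sqrt D := by
    rw [hQsq]
    calc E (quadPoly (Mᵀ * M)) ≤ c ^ 2 * E (sumSq n) := hQle
      _ ≤ c ^ 2 * Real.sqrt D := by
          exact mul_le_mul_of_nonneg_left hSle (by positivity)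
  have hsqQ : Real.sqrt (E (∑ a, q a ^ 2)) ≤ c * D ^ ((1 : ℝ) / 4) := by
    calc Real.sqrt (E (∑ a, q a ^ 2)) ≤ Real.sqrt (c ^ 2 * Real.sqrt D) :=
          Real.sqrt_le_sqrt hEq2
      _ = c * Real.sqrt (Real.sqrt D) := by
          rw [Real.sqrt_mul (sq_nonneg c), Real.sqrt_sq hc]
      _ = c * D ^ ((1 : ℝ) / 4) := by
          rw [Real.sqrt_eq_rpow, Real.sqrt_eq_rpow, ← Real.rpow_mul hD]
          norm_num
  have hCS := pe_CS E hE p q hp hq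
  rw [hLHS]
  calc E (∑ a, p a * q a)
      ≤ Real.sqrt (E (∑ a, p a ^ 2)) * Real.sqrt (E (∑ a, q a ^ 2)) := hCS
    _ = Real.sqrt D * Real.sqrt (E (∑ a, q a ^ 2)) := by rw [hPsq]
    _ ≤ Real.sqrt D * (c * D ^ ((1 : ℝ) / 4)) :=
        mul_le_mul_of_nonneg_left hsqQ (Real.sqrt_nonneg _)
    _ = c * (D ^ ((1 : ℝ) / 2) * D ^ ((1 : ℝ) / 4)) := by
        rw [Real.sqrt_eq_rpow]; ring
    _ = c * D ^ ((3 : ℝ) / 4) := by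
        rw [← Real.rpow_add' hD (by norm_num)]
        norm_num
end
end
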